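/- For X, Y ∈ ℝ^{M×N} with K_X = C X Xᵀ C and K_Y = C Y Yᵀ C (C the centering matrix), X and Y have the same representational dissimilarity matrix (all pairwise Euclidean distances between rows agree) if and only if the Procrustes size-and-shape distance min_{QᵀQ=I} ‖C X − C Y Q‖_F equals zero. -/

import Mathlib

open Matrix

lemma real_conjTranspose_eq {m n : ℕ} (A : Matrix (Fin m) (Fin n) ℝ) : Aᴴ = Aᵀ := rfl

lemma psd_tmul {m n : ℕ} (A : Matrix (Fin m) (Fin n) ℝ) : (Aᵀ * A).PosSemidef := by
  have h := Matrix.posSemidef_conjTranspose_mul_self A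
  rwa [real_conjTranspose_eq] at h

lemma psd_gram {m n : ℕ} (A : Matrix (Fin m) (Fin n) ℝ) : (A * Aᵀ).PosSemidef := by
  have h := Matrix.posSemidef_self_mul_conjTranspose A
  rwa [real_conjTranspose_eq] at h

/-- The square root of a positive semidefinite matrix, as defined in the older Mathlib
(`Matrix.PosSemidef.sqrt`, since removed). -/
noncomputable def Matrix.PosSemidef.sqrt {n : Type*} [Fintype n] [DecidableEq n]
    {A : Matrix n n ℝ} (hA : A.PosSemidef) : Matrix n n ℝ :=
  hA.1.eigenvectorUnitary.1 * diagonal ((√·) ∘ hA.1.eigenvalues) *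
    (star hA.1.eigenvectorUnitary : Matrix n n ℝ)

lemma Matrix.PosSemidef.posSemidef_sqrt {n : Type*} [Fintype n] [DecidableEq n]
    {A : Matrix n n ℝ} (hA : A.PosSemidef) : PosSemidef hA.sqrt := by
  apply PosSemidef.mul_mul_conjTranspose_same
  exact posSemidef_diagonal_iff.mpr fun i ↦ Real.sqrt_nonneg _

lemma psd_sand {M : ℕ} {Kx Ky : Matrix (Fin M) (Fin M) ℝ} (hx : Kx.PosSemidef) (hy : Ky.PosSemidef) :
    (hx.sqrt * Ky * hx.sqrt).PosSemidef := by
  have h := hy.mul_mul_conjTranspose_same hx.sqrt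
  rwa [hx.posSemidef_sqrt.isHermitian.eq] at h

/-- Nuclear norm: sum of singular values, i.e. `Tr[(AᵀA)^{1/2}]`. -/
noncomputable def nuclearNorm {m n : ℕ} (A : Matrix (Fin m) (Fin n) ℝ) : ℝ :=
  (Matrix.PosSemidef.sqrt (psd_tmul A)).trace

/-- Frobenius norm. -/
noncomputable def frobNorm {m n : ℕ} (A : Matrix (Fin m) (Fin n) ℝ) : ℝ :=
  Real.sqrt (Matrix.trace (Aᵀ * A))

/-- Fidelity `Tr[(Kx^{1/2} Ky Kx^{1/2})^{1/2}]` between PSD matrices. -/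
noncomputable def fidelity {M : ℕ} {Kx Ky : Matrix (Fin M) (Fin M) ℝ}
    (hx : Kx.PosSemidef) (hy : Ky.PosSemidef) : ℝ :=
  (Matrix.PosSemidef.sqrt (psd_sand hx hy)).trace

/-
Both sides are equivalent to the equality of the centred Gram matrices `(CX)(CX)ᵀ = (CY)(CY)ᵀ`.
Classical multidimensional scaling recovers the centred Gram matrix from the matrix `D` of
squared distances by double centring, `(CX)(CX)ᵀ = -½ C D C`; conversely the Gram matrix of `CX`
gives the squared distances between its rows, which are those of `X`. Matrices `A`, `B` with
`AAᵀ = BBᵀ` have rows with the same inner products, so a linear isometry of `ℝᴺ` carries the rows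
of `B` to those of `A`, i.e. `A = BQ` with `Q` orthogonal. Finally the orthogonal group is
compact, so the infimum is attained and vanishes exactly when such a `Q` exists.
-/

open scoped InnerProductSpace

lemma frobNorm_eq_zero_iff {m n : ℕ} {A : Matrix (Fin m) (Fin n) ℝ} : frobNorm A = 0 ↔ A = 0 := by
  rw [frobNorm, Real.sqrt_eq_zero (psd_tmul A).trace_nonneg, ← real_conjTranspose_eq,
    trace_conjTranspose_mul_self_eq_zero_iff]

lemma continuous_frobNorm {m n : ℕ} : Continuous (frobNorm : Matrix (Fin m) (Fin n) ℝ → ℝ) :=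
  Real.continuous_sqrt.comp (continuous_id.matrix_transpose.matrix_mul continuous_id).matrix_trace

lemma IsCompact.sInf_image_eq_zero_iff {α : Type*} [TopologicalSpace α] {s : Set α} {f : α → ℝ}
    (hs : IsCompact s) (hne : s.Nonempty) (hf : ContinuousOn f s) (hf₀ : ∀ x ∈ s, 0 ≤ f x) :
    sInf (f '' s) = 0 ↔ ∃ x ∈ s, f x = 0 := by
  have hbdd : BddBelow (f '' s) := ⟨0, Set.forall_mem_image.2 hf₀⟩
  constructor
  · intro h
    obtain ⟨x, hx, hfx⟩ := (hs.image_of_continuousOn hf).sInf_mem (hne.image f)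
    exact ⟨x, hx, hfx.trans h⟩
  · rintro ⟨x, hx, hfx⟩
    exact le_antisymm (hfx ▸ csInf_le hbdd ⟨x, hx, rfl⟩)
      (le_csInf (hne.image f) (Set.forall_mem_image.2 hf₀))

lemma isCompact_unitaryGroup (n 𝕜 : Type*) [Fintype n] [DecidableEq n] [RCLike 𝕜] :
    IsCompact (unitaryGroup n 𝕜 : Set (Matrix n n 𝕜)) := by
  have hball : IsCompact (Set.univ.pi (ι := n) fun _ =>
      Set.univ.pi fun _ : n => Metric.closedBall (0 : 𝕜) 1) :=
    isCompact_univ_pi fun _ => isCompact_univ_pi fun _ => isCompact_closedBall (0 : 𝕜) 1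
  refine hball.of_isClosed_subset ?_ fun U hU i _ j _ => ?_
  · have : (unitaryGroup n 𝕜 : Set (Matrix n n 𝕜)) = (fun U => star U * U) ⁻¹' {1} := by
      ext U
      exact mem_unitaryGroup_iff'
    rw [this]
    exact isClosed_singleton.preimage (by fun_prop)
  · simpa using entry_norm_bound_of_unitary hU i j

theorem exists_linearIsometryEquiv_apply_eq_of_inner_eq {ι 𝕜 E : Type*} [Fintype ι] [RCLike 𝕜]
    [NormedAddCommGroup E] [InnerProductSpace 𝕜 E] [FiniteDimensional 𝕜 E] {v w : ι → E}
    (h : ∀ i j, ⟪v i, v j⟫_𝕜 = ⟪w i, w j⟫_𝕜) :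
    ∃ T : E ≃ₗᵢ[𝕜] E, ∀ i, T (w i) = v i := by
  classical
  set f := Fintype.linearCombination 𝕜 v
  set g := Fintype.linearCombination 𝕜 w
  have hfg : ∀ c d, ⟪f c, f d⟫_𝕜 = ⟪g c, g d⟫_𝕜 := by
    intro c d
    simp [f, g, Fintype.linearCombination_apply, sum_inner, inner_sum, inner_smul_left,
      inner_smul_right, h]
  -- By `hfg`, `f` factors isometrically through `g`; on `range g` the factor is `f ∘ s`.
  obtain ⟨s, hs⟩ := g.rangeRestrict.exists_rightInverse_of_surjective g.range_rangeRestrict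
  have hgs : ∀ y, g (s y) = y := fun y => congrArg Subtype.val (LinearMap.congr_fun hs y)
  let L : LinearMap.range g →ₗᵢ[𝕜] E := (f ∘ₗ s).isometryOfInner fun x y => by
    simp [hfg, hgs]
  have hL : ∀ c, L ⟨g c, LinearMap.mem_range_self g c⟩ = f c := by
    intro c
    have : f (s ⟨g c, LinearMap.mem_range_self g c⟩ - c) = 0 := by
      rw [← inner_self_eq_zero (𝕜 := 𝕜), hfg, map_sub, hgs, sub_self, inner_zero_left]
    exact sub_eq_zero.1 ((map_sub f _ _).symm.trans this)
  refine ⟨L.extend.toLinearIsometryEquiv rfl, fun i => ?_⟩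
  have hw : w i = g (Pi.single i 1) := by simp [g]
  have hv : v i = f (Pi.single i 1) := by simp [f]
  rw [hv, ← hL, hw]
  exact L.extend_apply ⟨_, LinearMap.mem_range_self g _⟩

lemma LinearIsometryEquiv.exists_mem_orthogonalGroup_ofLp_apply_eq_vecMul {n : Type*} [Fintype n]
    [DecidableEq n] (T : EuclideanSpace ℝ n ≃ₗᵢ[ℝ] EuclideanSpace ℝ n) :
    ∃ Q ∈ orthogonalGroup n ℝ, ∀ x, (T x).ofLp = x.ofLp ᵥ* Q := by
  let b := (EuclideanSpace.basisFun n ℝ).toBasis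
  let T' : EuclideanSpace ℝ n →ₗ[ℝ] EuclideanSpace ℝ n := T.toLinearEquiv
  have hU : LinearMap.toMatrix b b T' ∈ orthogonalGroup n ℝ := T.toMatrix_mem_unitaryGroup _ _
  refine ⟨(LinearMap.toMatrix b b T')ᵀ, ?_, fun x => ?_⟩
  · rw [mem_orthogonalGroup_iff, transpose_transpose]
    exact (mem_orthogonalGroup_iff' n ℝ).1 hU
  · rw [vecMul_transpose]
    exact (LinearMap.toMatrix_mulVec_repr b b T' x).symm

lemma exists_mem_orthogonalGroup_eq_mul_iff {m n : Type*} [Fintype m] [Fintype n] [DecidableEq n]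
    {A B : Matrix m n ℝ} :
    (∃ Q ∈ orthogonalGroup n ℝ, A = B * Q) ↔ A * Aᵀ = B * Bᵀ := by
  constructor
  · rintro ⟨Q, hQ, rfl⟩
    rw [transpose_mul, Matrix.mul_assoc, ← Matrix.mul_assoc Q, (mem_orthogonalGroup_iff n ℝ).1 hQ,
      Matrix.one_mul]
  · intro h
    obtain ⟨T, hT⟩ := exists_linearIsometryEquiv_apply_eq_of_inner_eq (𝕜 := ℝ)
      (v := fun i => WithLp.toLp 2 (A i)) (w := fun i => WithLp.toLp 2 (B i)) fun i j => by
        simpa [PiLp.inner_apply, mul_apply, mul_comm] using congr_fun (congr_fun h j) i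
    obtain ⟨Q, hQ, hTQ⟩ := T.exists_mem_orthogonalGroup_ofLp_apply_eq_vecMul
    refine ⟨Q, hQ, funext fun i => ?_⟩
    rw [mul_apply_eq_vecMul, ← hTQ, hT]

def sqDistMatrix {m n : Type*} [Fintype n] (X : Matrix m n ℝ) : Matrix m m ℝ :=
  of fun i j => ∑ k, (X i k - X j k) ^ 2

lemma sqDistMatrix_eq_gram {m n : Type*} [Fintype n] (X : Matrix m n ℝ) :
    sqDistMatrix X =
      vecMulVec (diag (X * Xᵀ)) 1 + vecMulVec 1 (diag (X * Xᵀ)) - (2 : ℝ) • (X * Xᵀ) := by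
  ext i j
  simp only [sqDistMatrix, of_apply, Matrix.sub_apply, Matrix.add_apply, Matrix.smul_apply,
    vecMulVec_apply, diag_apply, mul_apply, transpose_apply, Pi.one_apply, mul_one, one_mul,
    smul_eq_mul, Finset.mul_sum, ← Finset.sum_add_distrib, ← Finset.sum_sub_distrib]
  exact Finset.sum_congr rfl fun k _ => by ring

noncomputable def centeringMatrix (m : Type*) [Fintype m] [DecidableEq m] : Matrix m m ℝ :=
  1 - (Fintype.card m : ℝ)⁻¹ • of fun _ _ => 1

section Centering

variable {m n : Type*} [Fintype m] [DecidableEq m]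

lemma transpose_centeringMatrix : (centeringMatrix m)ᵀ = centeringMatrix m := by
  ext i j
  simp [centeringMatrix, one_apply, eq_comm]

lemma centeringMatrix_mulVec_one : centeringMatrix m *ᵥ 1 = 0 := by
  ext i
  have : (Fintype.card m : ℝ) ≠ 0 := Nat.cast_ne_zero.2 (Fintype.card_pos_iff.2 ⟨i⟩).ne'
  simp [centeringMatrix, mulVec, dotProduct, one_apply, this]

lemma centeringMatrix_mul_apply (X : Matrix m n ℝ) (i : m) (k : n) :
    (centeringMatrix m * X) i k = X i k - (Fintype.card m : ℝ)⁻¹ * ∑ l, X l k := by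
  simp [centeringMatrix, sub_mul, mul_apply, Finset.mul_sum, one_apply]

variable [Fintype n]

lemma sqDistMatrix_centeringMatrix_mul (X : Matrix m n ℝ) :
    sqDistMatrix (centeringMatrix m * X) = sqDistMatrix X := by
  ext i j
  simp [sqDistMatrix, centeringMatrix_mul_apply]

lemma centeringMatrix_mul_sqDistMatrix_mul_centeringMatrix (X : Matrix m n ℝ) :
    centeringMatrix m * sqDistMatrix X * centeringMatrix m =
      (-2 : ℝ) • ((centeringMatrix m * X) * (centeringMatrix m * X)ᵀ) := by
  have hone : (1 : m → ℝ) ᵥ* centeringMatrix m = 0 := by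
    rw [← mulVec_transpose, transpose_centeringMatrix, centeringMatrix_mulVec_one]
  rw [sqDistMatrix_eq_gram, Matrix.mul_sub, Matrix.sub_mul, Matrix.mul_add, Matrix.add_mul,
    mul_vecMulVec, mul_vecMulVec, vecMulVec_mul, vecMulVec_mul, centeringMatrix_mulVec_one, hone,
    Matrix.mul_smul, Matrix.smul_mul, transpose_mul, transpose_centeringMatrix]
  simp [Matrix.mul_assoc, neg_smul]

lemma gram_centeringMatrix_mul_eq_iff {X Y : Matrix m n ℝ} :
    (centeringMatrix m * X) * (centeringMatrix m * X)ᵀ =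
        (centeringMatrix m * Y) * (centeringMatrix m * Y)ᵀ ↔
      sqDistMatrix X = sqDistMatrix Y := by
  constructor
  · intro h
    rw [← sqDistMatrix_centeringMatrix_mul X, sqDistMatrix_eq_gram, h, ← sqDistMatrix_eq_gram,
      sqDistMatrix_centeringMatrix_mul]
  · intro h
    apply smul_right_injective _ (by norm_num : (-2 : ℝ) ≠ 0)
    simp only [← centeringMatrix_mul_sqDistMatrix_mul_centeringMatrix, h]

end Centering

theorem rdm_eq_iff_procrustes_zero (M N : ℕ) (X Y : Matrix (Fin M) (Fin N) ℝ)
    (C : Matrix (Fin M) (Fin M) ℝ)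
    (hC : C = 1 - (M : ℝ)⁻¹ • Matrix.of (fun _ _ => (1 : ℝ))) :
    (∀ i j : Fin M,
        Real.sqrt (∑ k, (X i k - X j k) ^ 2) = Real.sqrt (∑ k, (Y i k - Y j k) ^ 2)) ↔
      sInf {t : ℝ | ∃ Q : Matrix (Fin N) (Fin N) ℝ, Qᵀ * Q = 1 ∧
        t = frobNorm (C * X - C * Y * Q)} = 0 := by
  obtain rfl : C = centeringMatrix (Fin M) := by rw [hC, centeringMatrix, Fintype.card_fin]
  have hrdm : (∀ i j : Fin M, √(∑ k, (X i k - X j k) ^ 2) = √(∑ k, (Y i k - Y j k) ^ 2)) ↔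
      sqDistMatrix X = sqDistMatrix Y := by
    rw [← Matrix.ext_iff]
    exact forall₂_congr fun i j => Real.sqrt_inj (by positivity) (by positivity)
  have hset : {t : ℝ | ∃ Q : Matrix (Fin N) (Fin N) ℝ, Qᵀ * Q = 1 ∧
      t = frobNorm (centeringMatrix (Fin M) * X - centeringMatrix (Fin M) * Y * Q)} =
      (fun Q => frobNorm (centeringMatrix (Fin M) * X - centeringMatrix (Fin M) * Y * Q)) ''
        (orthogonalGroup (Fin N) ℝ : Set (Matrix (Fin N) (Fin N) ℝ)) := by
    ext t
    simp [mem_orthogonalGroup_iff', eq_comm]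
  rw [hrdm, hset, (isCompact_unitaryGroup _ _).sInf_image_eq_zero_iff ⟨1, one_mem _⟩,
    ← gram_centeringMatrix_mul_eq_iff, ← exists_mem_orthogonalGroup_eq_mul_iff]
  · simp only [frobNorm_eq_zero_iff, sub_eq_zero, Matrix.mul_assoc, SetLike.mem_coe]
  · exact (continuous_frobNorm.comp (by fun_prop)).continuousOn
  · exact fun _ _ => Real.sqrt_nonneg _
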